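/- Let f : C_n → ℝ with Lip(f) = L and let h : ℝ → ℝ be twice differentiable with |h''(x)| < B for all x ∈ ℝ. Then for every y ∈ C_n, ‖∇(h∘f)(y) − h'(f(y))·∇f(y)‖₂ ≤ B L² √n. -/

import Mathlib

/-! Coordinatewise, `∂ᵢ(h ∘ f)(y) - h'(f y) ∂ᵢf(y)` is half a first-order Taylor remainder of `h`
between the values of `f` at the two neighbours `y^{i←±1}`, one of which is `y` itself. As `h'` is
`B`-Lipschitz, this remainder is at most `B (∂ᵢf(y))² ≤ B L²`, and the `ℓ²` norm of `n` such
coordinates is at most `B L² √n`. -/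

open MeasureTheory

noncomputable section

namespace Paper

/-- The Boolean hypercube `{-1,1}^n` as a finite set of vectors in `ℝ^n`. -/
def cube (n : ℕ) : Finset (Fin n → ℝ) := Fintype.piFinset fun _ => ({-1, 1} : Finset ℝ)

/-- The ℓ¹ norm of a vector. -/
def onorm {n : ℕ} (v : Fin n → ℝ) : ℝ := ∑ i, |v i|

/-- The Euclidean (ℓ²) norm of a vector. -/
def tnorm {n : ℕ} (v : Fin n → ℝ) : ℝ := Real.sqrt (∑ i, (v i) ^ 2)

/-- Discrete derivative of `f` at coordinate `i`. -/
def dd {n : ℕ} (f : (Fin n → ℝ) → ℝ) (i : Fin n) (y : Fin n → ℝ) : ℝ :=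
  (f (Function.update y i 1) - f (Function.update y i (-1))) / 2

/-- Discrete gradient of `f`. -/
def dgrad {n : ℕ} (f : (Fin n → ℝ) → ℝ) (y : Fin n → ℝ) : Fin n → ℝ := fun i => dd f i y

/-- The multilinear (harmonic) extension of `f : C_n → ℝ` to `[-1,1]^n`. -/
def mlext {n : ℕ} (f : (Fin n → ℝ) → ℝ) (x : Fin n → ℝ) : ℝ :=
  ∑ S : Finset (Fin n),
    (((2 : ℝ) ^ n)⁻¹ * ∑ y ∈ cube n, f y * ∏ i ∈ S, y i) * ∏ i ∈ S, x i

/-- The multilinear extension of the discrete gradient of `f`. -/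
def mlgrad {n : ℕ} (f : (Fin n → ℝ) → ℝ) (x : Fin n → ℝ) : Fin n → ℝ :=
  fun i => mlext (dd f i) x

/-- The Lipschitz constant `Lip(f) = max_{i,y∈C_n} |∂_i f(y)|`. -/
def lip {n : ℕ} (f : (Fin n → ℝ) → ℝ) : ℝ :=
  sSup {a | ∃ i : Fin n, ∃ y ∈ cube n, a = |dd f i y|}

/-- The Lipschitz constant of the discrete gradient:
`max_{x ≠ y ∈ C_n} ‖∇f(x) - ∇f(y)‖₁ / ‖x - y‖₁`. -/
def gradLip {n : ℕ} (f : (Fin n → ℝ) → ℝ) : ℝ :=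
  sSup {a | ∃ x ∈ cube n, ∃ y ∈ cube n, x ≠ y ∧
    a = onorm (dgrad f x - dgrad f y) / onorm (x - y)}

/-- Gaussian width of a set `K ⊆ ℝ^n`. -/
def gaussianWidth {n : ℕ} (K : Set (Fin n → ℝ)) : ℝ :=
  ∫ θ, sSup ((fun v => ∑ i, v i * θ i) '' K)
    ∂(Measure.pi fun _ : Fin n => ProbabilityTheory.gaussianReal 0 1)

/-- Gradient complexity `D(f) = GW({∇f(y) : y ∈ C_n} ∪ {0})`. -/
def gradComplexity {n : ℕ} (f : (Fin n → ℝ) → ℝ) : ℝ :=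
  gaussianWidth ((dgrad f '' (cube n : Set (Fin n → ℝ))) ∪ {0})

/-- The Gibbs distribution with Hamiltonian `f`, as a weight function on `ℝ^n`
supported on the cube. -/
def gibbs {n : ℕ} (f : (Fin n → ℝ) → ℝ) (y : Fin n → ℝ) : ℝ :=
  if y ∈ cube n then Real.exp (f y) / ∑ z ∈ cube n, Real.exp (f z) else 0

/-- The tilt `τ_θ p` of a weight function `p` on the cube. -/
def tilt {n : ℕ} (p : (Fin n → ℝ) → ℝ) (θ : Fin n → ℝ) (y : Fin n → ℝ) : ℝ :=
  p y * Real.exp (∑ i, θ i * y i) / ∑ z ∈ cube n, p z * Real.exp (∑ i, θ i * z i)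

/-- The mean (center of mass) of the tilted measure `τ_θ p`. -/
def tiltMean {n : ℕ} (p : (Fin n → ℝ) → ℝ) (θ : Fin n → ℝ) : Fin n → ℝ :=
  fun i => ∑ y ∈ cube n, tilt p θ y * y i

/-- A weight function on the cube is a product measure: the coordinates are
independent Bernoulli-type variables. -/
def IsProduct {n : ℕ} (ξ : (Fin n → ℝ) → ℝ) : Prop :=
  (∀ y, y ∉ cube n → ξ y = 0) ∧
  ∃ q : Fin n → ℝ, (∀ i, q i ∈ Set.Icc (0 : ℝ) 1) ∧
    ∀ y ∈ cube n, ξ y = ∏ i, (if y i = 1 then q i else 1 - q i)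

/-- The Wasserstein (transportation) distance between two weight functions on the cube. -/
def W1 {n : ℕ} (p q : (Fin n → ℝ) → ℝ) : ℝ :=
  sInf {w | ∃ π : (Fin n → ℝ) × (Fin n → ℝ) → ℝ,
    (∀ a, 0 ≤ π a) ∧
    (∀ x, ∑ y ∈ cube n, π (x, y) = p x) ∧
    (∀ y, ∑ x ∈ cube n, π (x, y) = q y) ∧
    w = (1 / 2) * ∑ x ∈ cube n, ∑ y ∈ cube n, π (x, y) * onorm (x - y)}

/-- `p` (the law of a random vector on the cube) is a `(ρ,δ,ε)`-tilt-mixture. -/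
def IsTiltMixture {n : ℕ} (p : (Fin n → ℝ) → ℝ) (ρ : Measure (Fin n → ℝ))
    (δ ε : ℝ) : Prop :=
  ∃ m : Measure (Fin n → ℝ), IsProbabilityMeasure m ∧
    m {θ | ¬ (tnorm θ ≤ ε * Real.sqrt n ∧ ∀ i, |θ i| ≤ 1 / 4)} = 0 ∧
    (∀ φ : (Fin n → ℝ) → ℝ,
      ∑ y ∈ cube n, φ y * p y = ∫ θ, ∑ y ∈ cube n, φ y * tilt p θ y ∂m) ∧
    ENNReal.ofReal (1 - δ) <
      m {θ | ∃ ξ, IsProduct ξ ∧ W1 (tilt p θ) ξ ≤ δ * n} ∧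
    ρ = m.map (tiltMean p)

/-- The product weight on the cube with mean vector `z ∈ [-1,1]^n`:
the law of `X(z)`. -/
def prodW {n : ℕ} (z : Fin n → ℝ) (y : Fin n → ℝ) : ℝ := ∏ i, (1 + y i * z i) / 2

/-- `q` (the law of a random vector `X` on the cube) is a `(ρ,δ)`-mixture:
there is a coupling of `X(ρ)` and `X` with `E‖X(ρ) - X‖₁ ≤ δ n`. -/
def IsMixture {n : ℕ} (q : (Fin n → ℝ) → ℝ) (ρ : Measure (Fin n → ℝ)) (δ : ℝ) : Prop :=
  ∃ π : (Fin n → ℝ) × (Fin n → ℝ) → ℝ,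
    (∀ a, 0 ≤ π a) ∧
    (∀ x ∈ cube n, ∑ y ∈ cube n, π (x, y) = ∫ z, prodW z x ∂ρ) ∧
    (∀ y, ∑ x ∈ cube n, π (x, y) = q y) ∧
    ∑ x ∈ cube n, ∑ y ∈ cube n, π (x, y) * onorm (x - y) ≤ δ * n

/-- `f_ν = log(dν/dμ)` for a weight function `p` on the cube (`μ` uniform). -/
def hamOf {n : ℕ} (p : (Fin n → ℝ) → ℝ) : (Fin n → ℝ) → ℝ :=
  fun y => Real.log ((2 : ℝ) ^ n * p y)

/-- `Tr(H(ν))` for a weight function `p` on the cube. -/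
def traceH {n : ℕ} (p : (Fin n → ℝ) → ℝ) : ℝ :=
  ∑ i, ((∑ y ∈ cube n, p y * (Real.tanh (dd (hamOf p) i y)) ^ 2) -
    (∑ y ∈ cube n, p y * Real.tanh (dd (hamOf p) i y)) ^ 2)

theorem norm_sub_sub_smul_le_of_hasDerivAt {E : Type*} [NormedAddCommGroup E] [NormedSpace ℝ E]
    {g g' : ℝ → E} {K : ℝ} (hg : ∀ x, HasDerivAt g (g' x) x)
    (hg' : ∀ x z, ‖g' x - g' z‖ ≤ K * |x - z|) (w u : ℝ) :
    ‖g u - g w - (u - w) • g' w‖ ≤ K / 2 * (u - w) ^ 2 := by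
  obtain ⟨d, rfl⟩ : ∃ d, u = w + d := ⟨u - w, by ring⟩
  -- Compare `t ↦ g (w + t d) - g w - t d • g' w` on `[0, 1]` with the barrier `K d² t² / 2`.
  have hφ : ∀ t, HasDerivAt (fun t : ℝ => g (w + t * d) - g w - (t * d) • g' w)
      (d • (g' (w + t * d) - g' w)) t := by
    intro t
    have hline : HasDerivAt (fun t : ℝ => t * d) d t := by
      simpa using (hasDerivAt_id t).mul_const d
    convert (((hg _).scomp t (hline.const_add w)).sub_const (g w)).sub
      (hline.smul_const (g' w)) using 1
    · rfl
    · rw [smul_sub]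
  have hψ : ∀ t, HasDerivAt (fun t : ℝ => K * d ^ 2 / 2 * t ^ 2) (K * d ^ 2 * t) t := by
    intro t
    exact ((hasDerivAt_pow 2 t).const_mul _).congr_deriv (by push_cast; ring)
  have hbound : ∀ t ∈ Set.Ico (0 : ℝ) 1, ‖d • (g' (w + t * d) - g' w)‖ ≤ K * d ^ 2 * t := by
    rintro t ⟨ht, -⟩
    calc ‖d • (g' (w + t * d) - g' w)‖ ≤ |d| * (K * |w + t * d - w|) := by
          rw [norm_smul, Real.norm_eq_abs]; gcongr; exact hg' _ _
      _ = K * d ^ 2 * t := by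
          rw [add_sub_cancel_left, abs_mul, abs_of_nonneg ht, ← sq_abs d]; ring
  have := image_norm_le_of_norm_deriv_right_le_deriv_boundary
    (fun t _ => (hφ t).continuousAt.continuousWithinAt) (fun t _ => (hφ t).hasDerivWithinAt)
    (by simp) hψ hbound (Set.right_mem_Icc.2 zero_le_one)
  simpa [div_mul_eq_mul_div] using this

theorem coord_eq_one_or_neg_one_of_mem_cube {n : ℕ} {y : Fin n → ℝ} (hy : y ∈ cube n)
    (i : Fin n) : y i = 1 ∨ y i = -1 := by
  simpa [cube, or_comm] using Fintype.mem_piFinset.1 hy i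

theorem abs_dd_le_lip {n : ℕ} (f : (Fin n → ℝ) → ℝ) {y : Fin n → ℝ} (hy : y ∈ cube n)
    (i : Fin n) :
    |dd f i y| ≤ lip f := by
  have hfin : {a | ∃ i : Fin n, ∃ y ∈ cube n, a = |dd f i y|}.Finite :=
    (Set.finite_range fun p : Fin n × cube n => |dd f p.1 p.2|).subset
      fun _ ⟨j, z, hz, ha⟩ => ⟨(j, ⟨z, hz⟩), ha.symm⟩
  exact le_csSup hfin.bddAbove ⟨i, y, hy, rfl⟩

theorem abs_dd_comp_sub_le {n : ℕ} {h h' : ℝ → ℝ} {K : ℝ} (hh : ∀ x, HasDerivAt h (h' x) x)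
    (hh' : ∀ x z, |h' x - h' z| ≤ K * |x - z|) (f : (Fin n → ℝ) → ℝ) {y : Fin n → ℝ}
    (hy : y ∈ cube n) (i : Fin n) :
    |dd (h ∘ f) i y - h' (f y) * dd f i y| ≤ K * dd f i y ^ 2 := by
  have taylor (c u : ℝ) : |h u - h c - h' c * (u - c)| ≤ K / 2 * (u - c) ^ 2 := by
    simpa [mul_comm] using norm_sub_sub_smul_le_of_hasDerivAt (E := ℝ) hh hh' c u
  simp only [dd, Function.comp_apply]
  set a := f (Function.update y i 1)
  set b := f (Function.update y i (-1))
  rcases coord_eq_one_or_neg_one_of_mem_cube hy i with hyi | hyi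
  · have hfy : f y = a := by conv_lhs => rw [← Function.update_eq_self i y, hyi]
    calc _ = |h b - h a - h' a * (b - a)| / 2 := by
          rw [hfy, ← abs_neg, ← abs_two, ← abs_div]; ring_nf
      _ ≤ _ := by linarith [taylor a b]
  · have hfy : f y = b := by conv_lhs => rw [← Function.update_eq_self i y, hyi]
    calc _ = |h a - h b - h' b * (a - b)| / 2 := by
          rw [hfy, ← abs_two, ← abs_div]; ring_nf
      _ ≤ _ := by linarith [taylor b a]

theorem tnorm_le_mul_sqrt_of_forall_abs_le {n : ℕ} {v : Fin n → ℝ} {c : ℝ}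
    (hv : ∀ i, |v i| ≤ c) :
    tnorm v ≤ c * √n := by
  rcases n.eq_zero_or_pos with rfl | hn
  · simp [tnorm]
  have hc : 0 ≤ c := (abs_nonneg _).trans (hv ⟨0, hn⟩)
  calc tnorm v ≤ √(∑ _i : Fin n, c ^ 2) := by
        refine Real.sqrt_le_sqrt (Finset.sum_le_sum fun i _ => ?_)
        rw [← sq_abs]
        gcongr
        exact hv i
    _ = c * √n := by
        rw [Finset.sum_const, Finset.card_univ, Fintype.card_fin, nsmul_eq_mul,
          Real.sqrt_mul (Nat.cast_nonneg n), Real.sqrt_sq hc, mul_comm]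

/-- Chain rule for the discrete gradient, ℓ² version on the cube.
If `Lip(f) = L` and `h` is twice differentiable with `|h''| < B`, then for every
`y ∈ C_n`, `‖∇(h∘f)(y) - h'(f(y))·∇f(y)‖₂ ≤ B L² √n`. -/
theorem chain_rule_two_norm (n : ℕ) (f : (Fin n → ℝ) → ℝ)
    (L : ℝ) (hL : lip f = L)
    (h h' h'' : ℝ → ℝ) (B : ℝ)
    (hd1 : ∀ x, HasDerivAt h (h' x) x)
    (hd2 : ∀ x, HasDerivAt h' (h'' x) x)
    (hB : ∀ x, |h'' x| < B)
    (y : Fin n → ℝ) (hy : y ∈ cube n) :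
    tnorm (fun i => dd (h ∘ f) i y - h' (f y) * dd f i y) ≤ B * L ^ 2 * Real.sqrt n := by
  subst hL
  have hB0 : 0 ≤ B := (abs_nonneg _).trans (hB 0).le
  have hlip : ∀ x z, |h' x - h' z| ≤ B * |x - z| := fun x z =>
    convex_univ.norm_image_sub_le_of_norm_hasDerivWithin_le
      (fun x _ => (hd2 x).hasDerivWithinAt) (fun x _ => (hB x).le) trivial trivial
  refine tnorm_le_mul_sqrt_of_forall_abs_le fun i => ?_
  calc _ ≤ B * dd f i y ^ 2 := abs_dd_comp_sub_le hd1 hlip f hy i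
    _ ≤ B * lip f ^ 2 := by
        rw [← sq_abs (dd f i y)]
        gcongr
        exact abs_dd_le_lip f hy i

end Paper
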